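/- Let k be a field and a < b, c < d in ℝ. The first graded Tor of interval modules satisfies Tor₁^gr(k[a,b), k[c,d)) ≅ k[max{a+d, b+c}, b+d). Moreover Tor₁^gr(k[a,b), k(−∞,d)) ≅ k[a+d, b+d) and Tor₁^gr(k[a,∞), k[c,d)) = 0. -/

import Mathlib

open CategoryTheory

noncomputable section
attribute [local instance] Classical.propDecidable
set_option linter.unusedSectionVars false

variable (R : Type) [Ring R] {P : Type} [Preorder P]

/-- Condition that a subset is order-convex. -/
def IsConvexSet (I : Set P) : Prop := ∀ ⦃x y z : P⦄, x ∈ I → z ∈ I → x ≤ y → y ≤ z → y ∈ I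

/-- The value of the interval persistence module at a point. -/
def intervalObj (I : Set P) (a : P) : Submodule R R :=
  if a ∈ I then (⊤ : Submodule R R) else ⊥

lemma intervalObj_eq_zero {I : Set P} {a : P} (h : a ∉ I) (x : intervalObj R I a) :
    x = 0 := by
  have hx := x.2
  simp only [intervalObj, if_neg h, Submodule.mem_bot] at hx
  exact Subtype.ext hx

/-- The structure map of the interval module between two degrees. -/
def intervalMapAux (I : Set P) (a b : P) :
    (intervalObj R I a) →ₗ[R] (intervalObj R I b) :=
  if h : a ∈ I ∧ b ∈ I then
    Submodule.inclusion (by simp [intervalObj, h.1, h.2])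
  else 0

lemma intervalMapAux_coe {I : Set P} {a b : P} (ha : a ∈ I) (hb : b ∈ I)
    (x : intervalObj R I a) : ((intervalMapAux R I a b x : R)) = (x : R) := by
  simp [intervalMapAux, ha, hb]

lemma intervalMapAux_of_not {I : Set P} {a b : P} (h : ¬(a ∈ I ∧ b ∈ I))
    (x : intervalObj R I a) : intervalMapAux R I a b x = 0 := by
  simp [intervalMapAux, h]

/-- The interval (indicator) persistence module of a convex set `I`,
as a functor from the preorder `P` to `R`-modules. -/
def intervalModule (I : Set P) (hI : IsConvexSet I) : P ⥤ ModuleCat R where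
  obj a := ModuleCat.of R (intervalObj R I a)
  map {a b} f := ModuleCat.ofHom (intervalMapAux R I a b)
  map_id a := by
    ext x : 2
    by_cases h : a ∈ I
    · exact Subtype.ext (intervalMapAux_coe R h h x)
    · rw [intervalObj_eq_zero R h x]
      simp
  map_comp {a b c} f g := by
    ext x : 2
    show intervalMapAux R I a c x = intervalMapAux R I b c (intervalMapAux R I a b x)
    by_cases ha : a ∈ I
    · by_cases hc : c ∈ I
      · have hb : b ∈ I := hI ha hc (leOfHom f) (leOfHom g)
        apply Subtype.ext
        rw [intervalMapAux_coe R ha hc, intervalMapAux_coe R hb hc,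
          intervalMapAux_coe R ha hb]
      · rw [intervalMapAux_of_not R (fun h => hc h.2),
          intervalMapAux_of_not R (fun h => hc h.2)]
    · rw [intervalObj_eq_zero R ha x]
      simp

end

lemma IsConvexSet.of_ordConnected {P : Type} [Preorder P] {s : Set P}
    (h : s.OrdConnected) : IsConvexSet s :=
  fun _ _ _ hx hz hxy hyz => h.out hx hz ⟨hxy, hyz⟩

open CategoryTheory Limits

noncomputable section
variable (k : Type) [Field k]

/-- The index poset `{(s,t) | s + t ≤ r}` for the graded tensor product. -/
abbrev SumLe (r : ℝ) : Type := {p : ℝ × ℝ // p.1 + p.2 ≤ r}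

lemma SumLe.le1 {r : ℝ} {p q : SumLe r} (h : p ≤ q) : p.1.1 ≤ q.1.1 := h.1
lemma SumLe.le2 {r : ℝ} {p q : SumLe r} (h : p ≤ q) : p.1.2 ≤ q.1.2 := h.2

/-- The diagram `(s,t) ↦ M_s ⊗ N_t` over `{(s,t) | s + t ≤ r}` whose colimit is the
degree-`r` piece of the graded tensor product `M ⊗_gr N`. -/
def grDiagram (M N : ℝ ⥤ ModuleCat k) (r : ℝ) : SumLe r ⥤ ModuleCat k where
  obj p := ModuleCat.of k (TensorProduct k (M.obj p.1.1) (N.obj p.1.2))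
  map {p q} f :=
    ModuleCat.ofHom (TensorProduct.map (M.map (homOfLE (SumLe.le1 (leOfHom f)))).hom
      (N.map (homOfLE (SumLe.le2 (leOfHom f)))).hom)
  map_id p := by
    apply ModuleCat.hom_ext
    dsimp
    rw [M.map_id, N.map_id]
    exact TensorProduct.map_id
  map_comp {p q s} f g := by
    apply ModuleCat.hom_ext
    dsimp
    rw [show (homOfLE (SumLe.le1 (leOfHom (f ≫ g))) : p.1.1 ⟶ s.1.1) =
        homOfLE (SumLe.le1 (leOfHom f)) ≫ homOfLE (SumLe.le1 (leOfHom g)) from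
        Subsingleton.elim _ _,
      show (homOfLE (SumLe.le2 (leOfHom (f ≫ g))) : p.1.2 ⟶ s.1.2) =
        homOfLE (SumLe.le2 (leOfHom f)) ≫ homOfLE (SumLe.le2 (leOfHom g)) from
        Subsingleton.elim _ _,
      M.map_comp, N.map_comp]
    exact (TensorProduct.map_comp _ _ _ _)

/-- The structure-map cocone: the degree-`r` diagram mapping into the degree-`r'` colimit. -/
def grCocone (M N : ℝ ⥤ ModuleCat k) {r r' : ℝ} (h : r ≤ r') :
    Cocone (grDiagram k M N r) where
  pt := colimit (grDiagram k M N r')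
  ι :=
    { app := fun j => colimit.ι (grDiagram k M N r') ⟨j.1, j.2.trans h⟩
      naturality := fun j j' f => by
        dsimp
        exact (colimit.w (grDiagram k M N r')
          (homOfLE (show (⟨j.1, j.2.trans h⟩ : SumLe r') ≤ ⟨j'.1, j'.2.trans h⟩ from
            leOfHom f))).trans (Category.comp_id _).symm }

/-- The graded-module tensor product of one-parameter persistence modules:
`(M ⊗_gr N)_r = colim_{s+t ≤ r} (M_s ⊗ N_t)`, with structure maps induced by
inclusions of index posets. -/
def grTensor (M N : ℝ ⥤ ModuleCat k) : ℝ ⥤ ModuleCat k where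
  obj r := colimit (grDiagram k M N r)
  map {r r'} f := colimit.desc (grDiagram k M N r) (grCocone k M N (leOfHom f))
  map_id r := by
    apply colimit.hom_ext
    intro j
    rw [colimit.ι_desc]
    exact (Category.comp_id _).symm
  map_comp {r r' r''} f g := by
    apply colimit.hom_ext
    intro j
    simp [grCocone]
    exact (colimit.ι_desc (grCocone k M N (leOfHom g)) ⟨j.1, j.2.trans (leOfHom f)⟩).symm

end

open CategoryTheory Limits

noncomputable section
variable (k : Type) [Field k]

/-- The map of degree-`r` tensor diagrams induced by a morphism in the left variable. -/
def grDiagramMapLeft {M M' : ℝ ⥤ ModuleCat k} (φ : M ⟶ M') (N : ℝ ⥤ ModuleCat k)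
    (r : ℝ) : grDiagram k M N r ⟶ grDiagram k M' N r where
  app p := ModuleCat.ofHom (TensorProduct.map (φ.app p.1.1).hom LinearMap.id)
  naturality {p q} f := by
    apply ModuleCat.hom_ext
    apply TensorProduct.ext'
    intro x y
    have h1 := LinearMap.congr_fun (congrArg ModuleCat.Hom.hom (φ.naturality (homOfLE (SumLe.le1 (leOfHom f))))) x
    simp only [ModuleCat.hom_comp, LinearMap.comp_apply] at h1
    show TensorProduct.map (φ.app q.1.1).hom LinearMap.id
        (TensorProduct.map (M.map (homOfLE (SumLe.le1 (leOfHom f)))).hom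
          (N.map (homOfLE (SumLe.le2 (leOfHom f)))).hom (x ⊗ₜ[k] y)) =
      TensorProduct.map (M'.map (homOfLE (SumLe.le1 (leOfHom f)))).hom
        (N.map (homOfLE (SumLe.le2 (leOfHom f)))).hom
        (TensorProduct.map (φ.app p.1.1).hom LinearMap.id (x ⊗ₜ[k] y))
    simp [TensorProduct.map_tmul, h1]

/-- The map of degree-`r` tensor diagrams induced by a morphism in the right variable. -/
def grDiagramMapRight (M : ℝ ⥤ ModuleCat k) {N N' : ℝ ⥤ ModuleCat k} (φ : N ⟶ N')
    (r : ℝ) : grDiagram k M N r ⟶ grDiagram k M N' r where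
  app p := ModuleCat.ofHom (TensorProduct.map LinearMap.id (φ.app p.1.2).hom)
  naturality {p q} f := by
    apply ModuleCat.hom_ext
    apply TensorProduct.ext'
    intro x y
    have h1 := LinearMap.congr_fun (congrArg ModuleCat.Hom.hom (φ.naturality (homOfLE (SumLe.le2 (leOfHom f))))) y
    simp only [ModuleCat.hom_comp, LinearMap.comp_apply] at h1
    show TensorProduct.map LinearMap.id (φ.app q.1.2).hom
        (TensorProduct.map (M.map (homOfLE (SumLe.le1 (leOfHom f)))).hom
          (N.map (homOfLE (SumLe.le2 (leOfHom f)))).hom (x ⊗ₜ[k] y)) =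
      TensorProduct.map (M.map (homOfLE (SumLe.le1 (leOfHom f)))).hom
        (N'.map (homOfLE (SumLe.le2 (leOfHom f)))).hom
        (TensorProduct.map LinearMap.id (φ.app p.1.2).hom (x ⊗ₜ[k] y))
    simp [TensorProduct.map_tmul, h1]

/-- Functoriality of the graded tensor product in the left variable. -/
def grTensorMapLeft {M M' : ℝ ⥤ ModuleCat k} (φ : M ⟶ M') (N : ℝ ⥤ ModuleCat k) :
    grTensor k M N ⟶ grTensor k M' N where
  app r := colimMap (grDiagramMapLeft k φ N r)
  naturality {r r'} f := by
    apply colimit.hom_ext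
    intro j
    show colimit.ι (grDiagram k M N r) j ≫
        colimit.desc (grDiagram k M N r) (grCocone k M N (leOfHom f)) ≫
        colimMap (grDiagramMapLeft k φ N r') =
      colimit.ι (grDiagram k M N r) j ≫
        colimMap (grDiagramMapLeft k φ N r) ≫
        colimit.desc (grDiagram k M' N r) (grCocone k M' N (leOfHom f))
    simp [grCocone]
    exact ι_colimMap _ _

/-- Functoriality of the graded tensor product in the right variable. -/
def grTensorMapRight (M : ℝ ⥤ ModuleCat k) {N N' : ℝ ⥤ ModuleCat k} (φ : N ⟶ N') :
    grTensor k M N ⟶ grTensor k M N' where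
  app r := colimMap (grDiagramMapRight k M φ r)
  naturality {r r'} f := by
    apply colimit.hom_ext
    intro j
    show colimit.ι (grDiagram k M N r) j ≫
        colimit.desc (grDiagram k M N r) (grCocone k M N (leOfHom f)) ≫
        colimMap (grDiagramMapRight k M φ r') =
      colimit.ι (grDiagram k M N r) j ≫
        colimMap (grDiagramMapRight k M φ r) ≫
        colimit.desc (grDiagram k M N' r) (grCocone k M N' (leOfHom f))
    simp [grCocone]
    exact ι_colimMap _ _

end

open CategoryTheory

noncomputable section
attribute [local instance] Classical.propDecidable
set_option linter.unusedSectionVars false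
variable (R : Type) [Ring R] {P : Type} [Preorder P]

/-- The degreewise component of a morphism between interval modules. -/
def intervalCross (I J : Set P) (a : P) :
    (intervalObj R I a) →ₗ[R] (intervalObj R J a) :=
  if h : a ∈ I ∧ a ∈ J then
    Submodule.inclusion (by simp [intervalObj, h.1, h.2])
  else 0

lemma intervalCross_coe {I J : Set P} {a : P} (hI : a ∈ I) (hJ : a ∈ J)
    (x : intervalObj R I a) : ((intervalCross R I J a x : R)) = (x : R) := by
  simp [intervalCross, hI, hJ]

lemma intervalCross_of_not {I J : Set P} {a : P} (h : ¬(a ∈ I ∧ a ∈ J))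
    (x : intervalObj R I a) : intervalCross R I J a x = 0 := by
  simp [intervalCross, h]

/-- The canonical morphism of interval persistence modules, whose component at a point
in `I ∩ J` is the identity of `R` and which is zero elsewhere.  The hypothesis `hcond`
is exactly the condition making this family of maps natural. -/
def intervalHom (I J : Set P) (hI : IsConvexSet I) (hJ : IsConvexSet J)
    (hcond : ∀ ⦃x y : P⦄, x ≤ y → x ∈ I → y ∈ J → (y ∈ I ↔ x ∈ J)) :
    intervalModule R I hI ⟶ intervalModule R J hJ where
  app a := ModuleCat.ofHom (intervalCross R I J a)
  naturality {a b} f := by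
    ext x : 2
    change ↥(intervalObj R I a) at x
    show intervalCross R I J b (intervalMapAux R I a b x) =
      intervalMapAux R J a b (intervalCross R I J a x)
    by_cases ha : a ∈ I
    · by_cases hbJ : b ∈ J
      · have hiff := hcond (leOfHom f) ha hbJ
        by_cases hbI : b ∈ I
        · have haJ : a ∈ J := hiff.mp hbI
          apply Subtype.ext
          rw [intervalCross_coe R hbI hbJ, intervalMapAux_coe R ha hbI,
            intervalMapAux_coe R haJ hbJ, intervalCross_coe R ha haJ]
        · have haJ : a ∉ J := fun h => hbI (hiff.mpr h)
          rw [intervalCross_of_not R (fun h => hbI h.1),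
            intervalCross_of_not R (fun h => haJ h.2)]
          simp
      · rw [intervalCross_of_not R (fun h => hbJ h.2),
          intervalMapAux_of_not R (fun h => hbJ h.2)]
    · rw [intervalObj_eq_zero R ha x]
      simp

end

/-! `k[x,∞)` is free on one generator in degree `x`, so tensoring with it is a translation:
`k[x,∞) ⊗gr k[J] ≅ k[J + x]`, since in degree `r` the colimit is spanned by a single generator,
which survives exactly when `r - x ∈ J`. Under these identifications the map induced by
`k[b,∞) → k[a,∞)` is the canonical map `k[J + b] → k[J + a]`, whose kernel is the interval
module of `(J + b) \ (J + a)`. For `J = [c,d)` and `J = (-∞,d)` this set is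
`[max(a+d, b+c), b+d)` and `[a+d, b+d)`; resolving `k[c,d)` instead and tensoring with `k[a,∞)`
gives `([a,∞) + d) \ ([a,∞) + c) = ∅`. -/

noncomputable section

open CategoryTheory Limits TensorProduct

lemma IsConvexSet.preimage_sub_const {J : Set ℝ} (hJ : IsConvexSet J) (x : ℝ) :
    IsConvexSet ((· - x) ⁻¹' J) :=
  fun _ _ _ hu hw huv hvw => hJ hu hw (sub_le_sub_right huv x) (sub_le_sub_right hvw x)

variable {k : Type} [Field k]

section Fiber

variable {S I J : Set ℝ} {r s t : ℝ}

lemma intervalObj_ext {x y : intervalObj k S r} (h : r ∈ S → (x : k) = y) : x = y := by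
  by_cases hr : r ∈ S
  · exact Subtype.ext (h hr)
  · rw [intervalObj_eq_zero k hr x, intervalObj_eq_zero k hr y]

variable (k S r) in
open Classical in
/-- The scalar `c` as an element of `k[S]_r`; it is `0` when `r ∉ S`. -/
def intervalObjMk : k →ₗ[k] intervalObj k S r :=
  if hr : r ∈ S then
    { toFun := fun c => ⟨c, by simp [intervalObj, hr]⟩
      map_add' := fun _ _ => rfl
      map_smul' := fun _ _ => rfl }
  else 0

lemma coe_intervalObjMk (hr : r ∈ S) (c : k) : (intervalObjMk k S r c : k) = c := by
  simp [intervalObjMk, hr]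

lemma intervalObjMk_coe (x : intervalObj k S r) : intervalObjMk k S r x = x :=
  intervalObj_ext fun hr => coe_intervalObjMk hr (x : k)

variable (k I J s t) in
def intervalTensorMul : intervalObj k I s ⊗[k] intervalObj k J t →ₗ[k] k :=
  LinearMap.mul' k k ∘ₗ TensorProduct.map (intervalObj k I s).subtype (intervalObj k J t).subtype

@[simp]
lemma intervalTensorMul_tmul (x : intervalObj k I s) (y : intervalObj k J t) :
    intervalTensorMul k I J s t (x ⊗ₜ y) = (x : k) * y := rfl

lemma eq_zero_of_notMem_prod (h : (s, t) ∉ I ×ˢ J)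
    (z : intervalObj k I s ⊗[k] intervalObj k J t) : z = 0 := by
  induction z using TensorProduct.induction_on with
  | zero => rfl
  | tmul x y =>
    rcases not_and_or.mp h with h | h
    · rw [intervalObj_eq_zero k h x, zero_tmul]
    · rw [intervalObj_eq_zero k h y, tmul_zero]
  | add _ _ hx hy => rw [hx, hy, add_zero]

lemma intervalTensorMul_eq_zero (h : (s, t) ∉ I ×ˢ J)
    (z : intervalObj k I s ⊗[k] intervalObj k J t) : intervalTensorMul k I J s t z = 0 := by
  rw [eq_zero_of_notMem_prod h z, map_zero]

variable (k I J s t) in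
def intervalTensorMk : k →ₗ[k] intervalObj k I s ⊗[k] intervalObj k J t :=
  (TensorProduct.mk k _ _).flip (intervalObjMk k J t 1) ∘ₗ intervalObjMk k I s

lemma intervalTensorMul_mk (h : (s, t) ∈ I ×ˢ J) (c : k) :
    intervalTensorMul k I J s t (intervalTensorMk k I J s t c) = c := by
  simp [intervalTensorMk, coe_intervalObjMk h.1, coe_intervalObjMk h.2]

lemma intervalTensorMk_mul (z : intervalObj k I s ⊗[k] intervalObj k J t) :
    intervalTensorMk k I J s t (intervalTensorMul k I J s t z) = z := by
  induction z using TensorProduct.induction_on with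
  | zero => simp
  | tmul x y =>
    rw [intervalTensorMul_tmul, intervalTensorMk, LinearMap.comp_apply, LinearMap.flip_apply,
      mk_apply, mul_comm, ← smul_eq_mul, map_smul, intervalObjMk_coe, smul_tmul, ← map_smul,
      smul_eq_mul, mul_one, intervalObjMk_coe]
  | add _ _ hx hy => rw [map_add, map_add, hx, hy]

end Fiber

section Kernel

lemma ShortComplex.exact_of_exact_map_evaluation {C D : Type*} [Category C] [Category D] [Abelian D]
    (S : ShortComplex (C ⥤ D)) (hS : ∀ X, (S.map ((evaluation C D).obj X)).Exact) : S.Exact := by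
  simp only [ShortComplex.exact_iff_isZero_homology] at hS ⊢
  exact Functor.isZero _ fun X => (hS X).of_iso (S.mapHomologyIso ((evaluation C D).obj X)).symm

lemma intervalHomCond_of_mem_iff {K K' L : Set ℝ}
    (hcond : ∀ ⦃x y : ℝ⦄, x ≤ y → x ∈ K → y ∈ K' → (y ∈ K ↔ x ∈ K'))
    (hmem : ∀ r, r ∈ L ↔ r ∈ K ∧ r ∉ K') :
    ∀ ⦃x y : ℝ⦄, x ≤ y → x ∈ L → y ∈ K → (y ∈ L ↔ x ∈ K) := by
  intro x y hxy hx hy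
  have hxK := ((hmem x).mp hx).1
  refine iff_of_true ((hmem y).mpr ⟨hy, fun hy' => ((hmem x).mp hx).2 ?_⟩) hxK
  exact (hcond hxy hxK hy').mp hy

variable {K K' L : Set ℝ} (hK : IsConvexSet K) (hK' : IsConvexSet K')
  (hcond : ∀ ⦃x y : ℝ⦄, x ≤ y → x ∈ K → y ∈ K' → (y ∈ K ↔ x ∈ K'))

variable (k) in
def intervalShortComplex (hL : IsConvexSet L) (hmem : ∀ r, r ∈ L ↔ r ∈ K ∧ r ∉ K') :
    ShortComplex (ℝ ⥤ ModuleCat k) :=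
  ShortComplex.mk (intervalHom k L K hL hK (intervalHomCond_of_mem_iff hcond hmem))
    (intervalHom k K K' hK hK' hcond) <| by
      ext r (x : intervalObj k L r)
      refine intervalObj_ext fun hr' => ?_
      change (intervalCross k K K' r (intervalCross k L K r x) : k) = 0
      rw [intervalCross_of_not k fun h => ((hmem r).mp h.1).2 hr', map_zero, ZeroMemClass.coe_zero]

variable (k) (hL : IsConvexSet L) (hmem : ∀ r, r ∈ L ↔ r ∈ K ∧ r ∉ K')

lemma intervalShortComplex_exact :
    (intervalShortComplex k hK hK' hcond hL hmem).Exact := by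
  refine ShortComplex.exact_of_exact_map_evaluation _ fun r => ?_
  rw [ShortComplex.moduleCat_exact_iff]
  intro (x : intervalObj k K r) hx
  change intervalCross k K K' r x = 0 at hx
  refine ⟨intervalObjMk k L r (x : k), intervalObj_ext fun hr => ?_⟩
  change (intervalCross k L K r (intervalObjMk k L r x) : k) = x
  by_cases hr' : r ∈ K'
  · rw [intervalCross_of_not k fun h => ((hmem r).mp h.1).2 hr', ZeroMemClass.coe_zero,
      ← intervalCross_coe k hr hr' x, hx, ZeroMemClass.coe_zero]
  · have hrL := (hmem r).mpr ⟨hr, hr'⟩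
    rw [intervalCross_coe k hrL hr, coe_intervalObjMk hrL]

lemma intervalShortComplex_mono_f :
    Mono (intervalShortComplex k hK hK' hcond hL hmem).f := by
  suffices ∀ r, Mono ((intervalShortComplex k hK hK' hcond hL hmem).f.app r) from
    NatTrans.mono_of_mono_app _
  intro r
  rw [ModuleCat.mono_iff_injective]
  intro (x : intervalObj k L r) y hxy
  change intervalCross k L K r x = intervalCross k L K r y at hxy
  refine intervalObj_ext fun hr => ?_
  have hrK := ((hmem r).mp hr).1
  rw [← intervalCross_coe k hr hrK x, ← intervalCross_coe k hr hrK y, hxy]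

def kernelIntervalHomIso : kernel (intervalHom k K K' hK hK' hcond) ≅ intervalModule k L hL :=
  have := intervalShortComplex_mono_f k hK hK' hcond hL hmem
  (kernelIsKernel _).conePointUniqueUpToIso
    (intervalShortComplex_exact k hK hK' hcond hL hmem).fIsKernel

end Kernel

section IntervalTensor

lemma grTensor_map_ι_apply {M N : ℝ ⥤ ModuleCat k} {r r' : ℝ} (f : r ⟶ r') (p : SumLe r)
    (z : (grDiagram k M N r).obj p) :
    (grTensor k M N).map f (colimit.ι (grDiagram k M N r) p z) =
      colimit.ι (grDiagram k M N r') ⟨p.1, p.2.trans (leOfHom f)⟩ z :=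
  colimit.ι_desc_apply (grCocone k M N (leOfHom f)) p z

lemma intervalMapAux_intervalObjMk {I : Set ℝ} {s s' : ℝ} (hs : s ∈ I) (c : k) :
    intervalMapAux k I s s' (intervalObjMk k I s c) = intervalObjMk k I s' c :=
  intervalObj_ext fun hs' => by
    rw [intervalMapAux_coe k hs hs', coe_intervalObjMk hs, coe_intervalObjMk hs']

/-- Conditions on `I, J, K` under which `k[I] ⊗gr k[J] ≅ k[K]`. In degree `r`, the colimit over
`s + t ≤ r` of `k[I]_s ⊗ k[J]_t` is spanned by the generators at the points of `I ×ˢ J`, any two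
of which are identified through their coordinatewise minimum; `K` is the set of degrees where
they survive. -/
structure IsIntervalTensor (I J K : Set ℝ) : Prop where
  mem_prod_of_le {r : ℝ} {p q : SumLe r} : r ∈ K → p ≤ q → p.1 ∈ I ×ˢ J → q.1 ∈ I ×ˢ J
  exists_mem_prod {r : ℝ} : r ∈ K → ∃ p : SumLe r, p.1 ∈ I ×ˢ J
  exists_zigzag {r : ℝ} {p : SumLe r} : r ∉ K → p.1 ∈ I ×ˢ J →
    ∃ p₀ q : SumLe r, p₀ ≤ p ∧ p₀ ≤ q ∧ p₀.1 ∈ I ×ˢ J ∧ q.1 ∉ I ×ˢ J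
  mem_of_le {r r' : ℝ} {p : SumLe r} : r ≤ r' → r' ∈ K → p.1 ∈ I ×ˢ J → r ∈ K

variable {I J K : Set ℝ} {hI : IsConvexSet I} {hJ : IsConvexSet J} {r : ℝ}

local notation "𝒟" => grDiagram k (intervalModule k I hI) (intervalModule k J hJ)
local notation "𝒯" p:max =>
  intervalObj k I (Prod.fst (Subtype.val p)) ⊗[k] intervalObj k J (Prod.snd (Subtype.val p))

lemma grDiagram_intervalModule_map_apply {p q : SumLe r} (f : p ⟶ q) (z : 𝒯 p) :
    (𝒟 r).map f z =
      TensorProduct.map (intervalMapAux k I p.1.1 q.1.1) (intervalMapAux k J p.1.2 q.1.2) z :=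
  rfl

lemma grDiagram_map_intervalTensorMk {p q : SumLe r} (f : p ⟶ q) (hp : p.1 ∈ I ×ˢ J) (c : k) :
    (𝒟 r).map f (intervalTensorMk k I J p.1.1 p.1.2 c) = intervalTensorMk k I J q.1.1 q.1.2 c :=
  congrArg₂ (· ⊗ₜ ·) (intervalMapAux_intervalObjMk hp.1 c) (intervalMapAux_intervalObjMk hp.2 1)

lemma ι_intervalTensorMk_of_le {p q : SumLe r} (hpq : p ≤ q) (hp : p.1 ∈ I ×ˢ J) (c : k) :
    colimit.ι (𝒟 r) p (intervalTensorMk k I J p.1.1 p.1.2 c) =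
      colimit.ι (𝒟 r) q (intervalTensorMk k I J q.1.1 q.1.2 c) := by
  rw [← colimit.w_apply (𝒟 r) (homOfLE hpq) (intervalTensorMk k I J p.1.1 p.1.2 c),
    grDiagram_map_intervalTensorMk _ hp]

lemma ι_intervalTensorMk_eq {p q : SumLe r} (hp : p.1 ∈ I ×ˢ J) (hq : q.1 ∈ I ×ˢ J) (c : k) :
    colimit.ι (𝒟 r) p (intervalTensorMk k I J p.1.1 p.1.2 c) =
      colimit.ι (𝒟 r) q (intervalTensorMk k I J q.1.1 q.1.2 c) := by
  let m : SumLe r := ⟨(min p.1.1 q.1.1, min p.1.2 q.1.2),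
    (add_le_add (min_le_left _ _) (min_le_left _ _)).trans p.2⟩
  have hm : m.1 ∈ I ×ˢ J := ⟨min_rec' (· ∈ I) hp.1 hq.1, min_rec' (· ∈ J) hp.2 hq.2⟩
  rw [← ι_intervalTensorMk_of_le (p := m) ⟨min_le_left _ _, min_le_left _ _⟩ hm,
    ← ι_intervalTensorMk_of_le (p := m) ⟨min_le_right _ _, min_le_right _ _⟩ hm]

lemma intervalTensorMul_map {p q : SumLe r} (f : p ⟶ q) (h : p.1 ∈ I ×ˢ J → q.1 ∈ I ×ˢ J)
    (z : 𝒯 p) :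
    intervalTensorMul k I J q.1.1 q.1.2 ((𝒟 r).map f z) =
      intervalTensorMul k I J p.1.1 p.1.2 z := by
  by_cases hp : p.1 ∈ I ×ˢ J
  · rw [← intervalTensorMk_mul z, grDiagram_map_intervalTensorMk f hp, intervalTensorMul_mk (h hp),
      intervalTensorMul_mk hp]
  · rw [grDiagram_intervalModule_map_apply, intervalTensorMul_eq_zero hp,
      eq_zero_of_notMem_prod hp z, map_zero, map_zero]

lemma ι_eq_zero_of_notMem {p : SumLe r} (hp : p.1 ∉ I ×ˢ J) (z : 𝒯 p) :
    colimit.ι (𝒟 r) p z = 0 := by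
  rw [eq_zero_of_notMem_prod hp z]
  exact map_zero _

variable (hD : IsIntervalTensor I J K)
include hD

lemma ι_intervalTensorMk_eq_zero {p : SumLe r} (hr : r ∉ K) (hp : p.1 ∈ I ×ˢ J) (c : k) :
    colimit.ι (𝒟 r) p (intervalTensorMk k I J p.1.1 p.1.2 c) = 0 := by
  obtain ⟨p₀, q, hp₀p, hp₀q, hp₀, hq⟩ := hD.exists_zigzag hr hp
  rw [← ι_intervalTensorMk_of_le hp₀p hp₀, ι_intervalTensorMk_of_le hp₀q hp₀]
  exact ι_eq_zero_of_notMem hq _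

def intervalTensorCocone (r : ℝ) : Cocone (𝒟 r) where
  pt := ModuleCat.of k (intervalObj k K r)
  ι.app p := ModuleCat.ofHom (intervalObjMk k K r ∘ₗ intervalTensorMul k I J p.1.1 p.1.2)
  ι.naturality p q f := by
    ext (z : 𝒯 p)
    refine intervalObj_ext fun hr => ?_
    change (intervalObjMk k K r (intervalTensorMul k I J q.1.1 q.1.2 ((𝒟 r).map f z)) : k) =
      intervalObjMk k K r (intervalTensorMul k I J p.1.1 p.1.2 z)
    rw [intervalTensorMul_map f (hD.mem_prod_of_le hr (leOfHom f))]

lemma colimit_desc_intervalTensorCocone_ι {p : SumLe r} (z : 𝒯 p) :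
    colimit.desc (𝒟 r) (intervalTensorCocone hD r) (colimit.ι (𝒟 r) p z) =
      intervalObjMk k K r (intervalTensorMul k I J p.1.1 p.1.2 z) :=
  (colimit.ι_desc_apply (intervalTensorCocone hD r) p z).trans rfl

open Classical in
def intervalTensorInv (r : ℝ) : ModuleCat.of k (intervalObj k K r) ⟶ colimit (𝒟 r) :=
  if hr : r ∈ K then
    ModuleCat.ofHom (intervalTensorMk k I J _ _ ∘ₗ (intervalObj k K r).subtype) ≫
      colimit.ι (𝒟 r) (hD.exists_mem_prod hr).choose
  else 0

lemma intervalTensorInv_apply (hr : r ∈ K) {p : SumLe r} (hp : p.1 ∈ I ×ˢ J)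
    (x : intervalObj k K r) :
    intervalTensorInv hD r x = colimit.ι (𝒟 r) p (intervalTensorMk k I J p.1.1 p.1.2 x) := by
  rw [intervalTensorInv, dif_pos hr]
  exact ι_intervalTensorMk_eq (hD.exists_mem_prod hr).choose_spec hp _

lemma intervalTensorCocone_desc_comp_inv :
    colimit.desc (𝒟 r) (intervalTensorCocone hD r) ≫ intervalTensorInv hD r = 𝟙 _ := by
  refine colimit.hom_ext fun p => ?_
  ext (z : 𝒯 p)
  change intervalTensorInv hD r
    (colimit.desc (𝒟 r) (intervalTensorCocone hD r) (colimit.ι (𝒟 r) p z)) = colimit.ι (𝒟 r) p z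
  rw [colimit_desc_intervalTensorCocone_ι]
  by_cases hp : p.1 ∈ I ×ˢ J
  · conv_rhs => rw [← intervalTensorMk_mul z]
    by_cases hr : r ∈ K
    · rw [intervalTensorInv_apply hD hr hp, coe_intervalObjMk hr]
    · rw [intervalObj_eq_zero k hr (intervalObjMk k K r _)]
      exact (map_zero _).trans (ι_intervalTensorMk_eq_zero hD hr hp _).symm
  · rw [intervalTensorMul_eq_zero hp, map_zero]
    exact (map_zero _).trans (ι_eq_zero_of_notMem hp z).symm

lemma intervalTensorInv_comp_desc :
    intervalTensorInv hD r ≫ colimit.desc (𝒟 r) (intervalTensorCocone hD r) = 𝟙 _ := by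
  ext (x : intervalObj k K r)
  refine intervalObj_ext fun hr => ?_
  obtain ⟨p, hp⟩ := hD.exists_mem_prod hr
  rw [ConcreteCategory.comp_apply, intervalTensorInv_apply hD hr hp,
    colimit_desc_intervalTensorCocone_ι, coe_intervalObjMk hr, intervalTensorMul_mk hp]
  rfl

lemma grTensor_map_comp_intervalTensorCocone_desc (hK : IsConvexSet K) {r r' : ℝ} (f : r ⟶ r') :
    (grTensor k (intervalModule k I hI) (intervalModule k J hJ)).map f ≫
        colimit.desc (𝒟 r') (intervalTensorCocone hD r') =
      colimit.desc (𝒟 r) (intervalTensorCocone hD r) ≫ (intervalModule k K hK).map f := by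
  refine colimit.hom_ext fun p => ?_
  ext (z : 𝒯 p)
  change colimit.desc (𝒟 r') (intervalTensorCocone hD r')
      ((grTensor k (intervalModule k I hI) (intervalModule k J hJ)).map f (colimit.ι (𝒟 r) p z)) =
    intervalMapAux k K r r' (colimit.desc (𝒟 r) (intervalTensorCocone hD r) (colimit.ι (𝒟 r) p z))
  rw [grTensor_map_ι_apply (M := intervalModule k I hI) (N := intervalModule k J hJ) f p z,
    colimit_desc_intervalTensorCocone_ι, colimit_desc_intervalTensorCocone_ι]
  refine intervalObj_ext fun hr' => ?_
  rw [coe_intervalObjMk hr']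
  by_cases hr : r ∈ K
  · rw [intervalMapAux_coe k hr hr', coe_intervalObjMk hr]
  · have hp : p.1 ∉ I ×ˢ J := fun hp => hr (hD.mem_of_le (leOfHom f) hr' hp)
    rw [intervalMapAux_of_not k fun h => hr h.1, ZeroMemClass.coe_zero]
    exact intervalTensorMul_eq_zero hp z

lemma colimMap_comp_desc_intervalTensorCocone {I' J' K' : Set ℝ} {hI' : IsConvexSet I'}
    {hJ' : IsConvexSet J'} (hD' : IsIntervalTensor I' J' K')
    (θ : 𝒟 r ⟶ grDiagram k (intervalModule k I' hI') (intervalModule k J' hJ') r)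
    (hθ : ∀ p (z : 𝒯 p), intervalTensorMul k I' J' p.1.1 p.1.2 (θ.app p z) =
      intervalTensorMul k I J p.1.1 p.1.2 z)
    (hKK' : ∀ p : SumLe r, p.1 ∈ I ×ˢ J → r ∈ K' → r ∈ K) :
    colimMap θ ≫ colimit.desc _ (intervalTensorCocone hD' r) =
      colimit.desc (𝒟 r) (intervalTensorCocone hD r) ≫
        ModuleCat.ofHom (intervalCross k K K' r) := by
  refine colimit.hom_ext fun p => ?_
  rw [ι_colimMap_assoc, colimit.ι_desc]
  ext (z : 𝒯 p)
  change intervalObjMk k K' r (intervalTensorMul k I' J' p.1.1 p.1.2 (θ.app p z)) =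
    intervalCross k K K' r (colimit.desc (𝒟 r) (intervalTensorCocone hD r) (colimit.ι (𝒟 r) p z))
  rw [colimit_desc_intervalTensorCocone_ι]
  refine intervalObj_ext fun hr' => ?_
  rw [coe_intervalObjMk hr', hθ]
  by_cases hp : p.1 ∈ I ×ˢ J
  · have hr := hKK' p hp hr'
    rw [intervalCross_coe k hr hr', coe_intervalObjMk hr]
  · rw [intervalTensorMul_eq_zero hp, map_zero, map_zero, ZeroMemClass.coe_zero]

variable (k hI hJ) in
def grTensorIntervalIso (hK : IsConvexSet K) :
    grTensor k (intervalModule k I hI) (intervalModule k J hJ) ≅ intervalModule k K hK :=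
  NatIso.ofComponents
    (fun _ => ⟨_, _, intervalTensorCocone_desc_comp_inv hD, intervalTensorInv_comp_desc hD⟩)
    (grTensor_map_comp_intervalTensorCocone_desc hD hK)

end IntervalTensor

section Translation

lemma IsIntervalTensor.Ici_left (x : ℝ) {J : Set ℝ} (hJ : IsConvexSet J) :
    IsIntervalTensor (Set.Ici x) J ((· - x) ⁻¹' J) where
  mem_prod_of_le {r p q} hr hpq hp := by
    have hx : x ≤ q.1.1 := hp.1.trans hpq.1
    exact ⟨hx, hJ hp.2 hr hpq.2 (by linarith [q.2])⟩
  exists_mem_prod {r} hr := ⟨⟨(x, r - x), by simp⟩, Set.self_mem_Ici, hr⟩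
  exists_zigzag {r p} hr hp := ⟨⟨(x, p.1.2), by linarith [p.2, hp.1.out]⟩, ⟨(x, r - x), by simp⟩,
    ⟨hp.1, le_rfl⟩, ⟨le_rfl, by linarith [p.2, hp.1.out]⟩, ⟨Set.self_mem_Ici, hp.2⟩,
    fun h => hr h.2⟩
  mem_of_le {r r' p} hrr' hr' hp := hJ hp.2 hr' (by linarith [p.2, hp.1.out]) (by simpa using hrr')

lemma IsIntervalTensor.Ici_right {I : Set ℝ} (hI : IsConvexSet I) (y : ℝ) :
    IsIntervalTensor I (Set.Ici y) ((· - y) ⁻¹' I) where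
  mem_prod_of_le {r p q} hr hpq hp := by
    have hy : y ≤ q.1.2 := hp.2.trans hpq.2
    exact ⟨hI hp.1 hr hpq.1 (by linarith [q.2]), hy⟩
  exists_mem_prod {r} hr := ⟨⟨(r - y, y), by simp⟩, hr, Set.self_mem_Ici⟩
  exists_zigzag {r p} hr hp := ⟨⟨(p.1.1, y), by linarith [p.2, hp.2.out]⟩, ⟨(r - y, y), by simp⟩,
    ⟨le_rfl, hp.2⟩, ⟨by linarith [p.2, hp.2.out], le_rfl⟩, ⟨hp.1, Set.self_mem_Ici⟩,
    fun h => hr h.1⟩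
  mem_of_le {r r' p} hrr' hr' hp := hI hp.1 hr' (by linarith [p.2, hp.2.out]) (by simpa using hrr')

lemma intervalHomCond_preimage_sub {J : Set ℝ} (hJ : IsConvexSet J) {a b : ℝ} (hab : a ≤ b) :
    ∀ ⦃x y : ℝ⦄, x ≤ y → x ∈ (· - b) ⁻¹' J → y ∈ (· - a) ⁻¹' J →
      (y ∈ (· - b) ⁻¹' J ↔ x ∈ (· - a) ⁻¹' J) := fun x y hxy hx hy =>
  iff_of_true (hJ hx hy (sub_le_sub_right hxy b) (sub_le_sub_left hab y))
    (hJ hx hy (sub_le_sub_left hab x) (sub_le_sub_right hxy a))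

end Translation

section Squares

variable {I I' J J' K K' : Set ℝ} {s t : ℝ}

lemma coe_intervalCross_of_subset (h : I ⊆ I') (x : intervalObj k I s) :
    (intervalCross k I I' s x : k) = x := by
  by_cases hs : s ∈ I
  · exact intervalCross_coe k hs (h hs) x
  · rw [intervalObj_eq_zero k hs x, map_zero, ZeroMemClass.coe_zero, ZeroMemClass.coe_zero]

lemma intervalTensorMul_map_intervalCross_left (h : I ⊆ I')
    (z : intervalObj k I s ⊗[k] intervalObj k J t) :
    intervalTensorMul k I' J s t (TensorProduct.map (intervalCross k I I' s) LinearMap.id z) =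
      intervalTensorMul k I J s t z := by
  induction z using TensorProduct.induction_on with
  | zero => simp
  | tmul x y => simp [coe_intervalCross_of_subset h]
  | add _ _ hx hy => rw [map_add, map_add, hx, hy, map_add]

lemma intervalTensorMul_map_intervalCross_right (h : J ⊆ J')
    (z : intervalObj k I s ⊗[k] intervalObj k J t) :
    intervalTensorMul k I J' s t (TensorProduct.map LinearMap.id (intervalCross k J J' t) z) =
      intervalTensorMul k I J s t z := by
  induction z using TensorProduct.induction_on with
  | zero => simp
  | tmul x y => simp [coe_intervalCross_of_subset h]
  | add _ _ hx hy => rw [map_add, map_add, hx, hy, map_add]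

variable {hI : IsConvexSet I} {hI' : IsConvexSet I'} {hJ : IsConvexSet J} {hJ' : IsConvexSet J'}
  (hK : IsConvexSet K) (hK' : IsConvexSet K')
  {hcondK : ∀ ⦃x y : ℝ⦄, x ≤ y → x ∈ K → y ∈ K' → (y ∈ K ↔ x ∈ K')}

lemma grTensorMapLeft_intervalHom_comp_hom
    {hcond : ∀ ⦃x y : ℝ⦄, x ≤ y → x ∈ I → y ∈ I' → (y ∈ I ↔ x ∈ I')}
    (hD : IsIntervalTensor I J K) (hD' : IsIntervalTensor I' J K') (hII' : I ⊆ I')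
    (hKK' : ∀ r (p : SumLe r), p.1 ∈ I ×ˢ J → r ∈ K' → r ∈ K) :
    grTensorMapLeft k (intervalHom k I I' hI hI' hcond) (intervalModule k J hJ) ≫
        (grTensorIntervalIso k hI' hJ hD' hK').hom =
      (grTensorIntervalIso k hI hJ hD hK).hom ≫ intervalHom k K K' hK hK' hcondK := by
  ext r : 2
  exact colimMap_comp_desc_intervalTensorCocone hD hD' _
    (fun _ z => intervalTensorMul_map_intervalCross_left hII' z) (hKK' r)

lemma grTensorMapRight_intervalHom_comp_hom
    {hcond : ∀ ⦃x y : ℝ⦄, x ≤ y → x ∈ J → y ∈ J' → (y ∈ J ↔ x ∈ J')}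
    (hD : IsIntervalTensor I J K) (hD' : IsIntervalTensor I J' K') (hJJ' : J ⊆ J')
    (hKK' : ∀ r (p : SumLe r), p.1 ∈ I ×ˢ J → r ∈ K' → r ∈ K) :
    grTensorMapRight k (intervalModule k I hI) (intervalHom k J J' hJ hJ' hcond) ≫
        (grTensorIntervalIso k hI hJ' hD' hK').hom =
      (grTensorIntervalIso k hI hJ hD hK).hom ≫ intervalHom k K K' hK hK' hcondK := by
  ext r : 2
  exact colimMap_comp_desc_intervalTensorCocone hD hD' _
    (fun _ z => intervalTensorMul_map_intervalCross_right hJJ' z) (hKK' r)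

end Squares

section Tor

variable {J L : Set ℝ} (hJ : IsConvexSet J) (hL : IsConvexSet L) {a b : ℝ}

variable (k) in
def kernelGrTensorMapLeftIciIso (hab : a ≤ b) (hmem : ∀ r, r ∈ L ↔ r - b ∈ J ∧ r - a ∉ J) :
    kernel (grTensorMapLeft k
        (intervalHom k (Set.Ici b) (Set.Ici a)
          (.of_ordConnected Set.ordConnected_Ici) (.of_ordConnected Set.ordConnected_Ici)
          (fun _ _ hxy hx _ => iff_of_true (hx.trans hxy) (hab.trans hx)))
        (intervalModule k J hJ)) ≅
      intervalModule k L hL :=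
  kernel.mapIso _ _ _ _
      (grTensorMapLeft_intervalHom_comp_hom (hJ.preimage_sub_const b) (hJ.preimage_sub_const a)
        (hcondK := intervalHomCond_preimage_sub hJ hab)
        (.Ici_left b hJ) (.Ici_left a hJ) (Set.Ici_subset_Ici.mpr hab)
        fun r p hp hr => hJ hp.2 hr (by linarith [p.2, hp.1.out]) (by linarith)) ≪≫
    kernelIntervalHomIso k _ _ _ hL hmem

variable (k) in
def kernelGrTensorMapRightIciIso {I : Set ℝ} (hI : IsConvexSet I) {c d : ℝ} (hcd : c ≤ d)
    (hmem : ∀ r, r ∈ L ↔ r - d ∈ I ∧ r - c ∉ I) :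
    kernel (grTensorMapRight k (intervalModule k I hI)
        (intervalHom k (Set.Ici d) (Set.Ici c)
          (.of_ordConnected Set.ordConnected_Ici) (.of_ordConnected Set.ordConnected_Ici)
          (fun _ _ hxy hx _ => iff_of_true (hx.trans hxy) (hcd.trans hx)))) ≅
      intervalModule k L hL :=
  kernel.mapIso _ _ _ _
      (grTensorMapRight_intervalHom_comp_hom (hI.preimage_sub_const d) (hI.preimage_sub_const c)
        (hcondK := intervalHomCond_preimage_sub hI hcd)
        (.Ici_right hI d) (.Ici_right hI c) (Set.Ici_subset_Ici.mpr hcd)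
        fun r p hp hr => hI hp.1 hr (by linarith [p.2, hp.2.out]) (by linarith)) ≪≫
    kernelIntervalHomIso k _ _ _ hL hmem

end Tor

variable (k) in
lemma isZero_intervalModule_empty (h : IsConvexSet (∅ : Set ℝ)) :
    IsZero (intervalModule k ∅ h) :=
  Functor.isZero _ fun r =>
    have : Subsingleton ((intervalModule k ∅ h).obj r) :=
      ⟨fun _ _ => intervalObj_ext fun hr => hr.elim⟩
    ModuleCat.isZero_of_subsingleton _

end

open CategoryTheory Limits in
/-- `Tor₁` is modelled as the kernel of the free resolution `k[b,∞) → k[a,∞)` of `k[a,b)`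
(for the last claim, `k[d,∞) → k[c,∞)` of `k[c,d)`) tensored with the other module. -/
theorem grTor_interval (k : Type) [Field k] (a b c d : ℝ) (hab : a < b) (hcd : c < d) :
    Nonempty
      (kernel (grTensorMapLeft k
          (intervalHom k (Set.Ici b) (Set.Ici a)
            (.of_ordConnected Set.ordConnected_Ici) (.of_ordConnected Set.ordConnected_Ici)
            (fun x y hxy hx _ => iff_of_true (hx.trans hxy) (le_trans hab.le hx)))
          (intervalModule k (Set.Ico c d) (.of_ordConnected Set.ordConnected_Ico))) ≅
        intervalModule k (Set.Ico (max (a + d) (b + c)) (b + d))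
          (.of_ordConnected Set.ordConnected_Ico)) ∧
    Nonempty
      (kernel (grTensorMapLeft k
          (intervalHom k (Set.Ici b) (Set.Ici a)
            (.of_ordConnected Set.ordConnected_Ici) (.of_ordConnected Set.ordConnected_Ici)
            (fun x y hxy hx _ => iff_of_true (hx.trans hxy) (le_trans hab.le hx)))
          (intervalModule k (Set.Iio d) (.of_ordConnected Set.ordConnected_Iio))) ≅
        intervalModule k (Set.Ico (a + d) (b + d))
          (.of_ordConnected Set.ordConnected_Ico)) ∧
    IsZero
      (kernel (grTensorMapRight k
        (intervalModule k (Set.Ici a) (.of_ordConnected Set.ordConnected_Ici))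
        (intervalHom k (Set.Ici d) (Set.Ici c)
          (.of_ordConnected Set.ordConnected_Ici) (.of_ordConnected Set.ordConnected_Ici)
          (fun x y hxy hx _ => iff_of_true (hx.trans hxy) (le_trans hcd.le hx))))) := by
  refine ⟨⟨kernelGrTensorMapLeftIciIso k _ _ hab.le fun r => ?_⟩,
    ⟨kernelGrTensorMapLeftIciIso k _ _ hab.le fun r => ?_⟩,
    (isZero_intervalModule_empty k (.of_ordConnected Set.ordConnected_empty)).of_iso
      (kernelGrTensorMapRightIciIso k _ _ hcd.le fun r => ?_)⟩
  all_goals grind
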